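/- arXiv:1710.10462 — 8 statements merged into one kernel-verified Lean document; each statement's English description precedes it below -/
import Mathlib

section
/- Let m and n be integers with m > n ≥ 2, m odd and n even. Then for every real number x with m·sin(x) ≠ sin(m·x), one has g(x) = (n·sin(m·x) − m·sin(n·x))/(m·sin(x) − sin(m·x)) ≥ −(m+n)/(m·|sin(x)| + 1). -/
open Real

lemma abs_sin_nat_mul_le (k : ℕ) (x : ℝ) : |Real.sin (k * x)| ≤ k * |Real.sin x| := by
  induction k with
  | zero => simp
  | succ k ih =>
    have e : ((k : ℝ) + 1) * x = k * x + x := by ring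
    push_cast [e, Real.sin_add]
    calc |Real.sin (k*x) * Real.cos x + Real.cos (k*x) * Real.sin x|
        ≤ |Real.sin (k*x)| * |Real.cos x| + |Real.cos (k*x)| * |Real.sin x| := by
          rw [← abs_mul, ← abs_mul]; exact abs_add_le _ _
      _ ≤ ((k : ℝ) + 1) * |Real.sin x| := by
          nlinarith [Real.abs_cos_le_one x, Real.abs_cos_le_one ((k:ℝ)*x),
            abs_nonneg (Real.sin ((k:ℝ)*x)), abs_nonneg (Real.sin x),
            abs_nonneg (Real.cos ((k:ℝ)*x)), abs_nonneg (Real.cos x), ih]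

lemma key (m n s A B : ℝ) (hm : 3 ≤ m) (hn : 2 ≤ n) (hs : 0 ≤ s)
    (hA1 : |A| ≤ 1) (hB1 : |B| ≤ 1) (hAm : |A| ≤ m * s) (hBn : |B| ≤ n * s)
    (hD : m * s - A ≠ 0) :
    (n * A - m * B) / (m * s - A) ≥ -(m + n) / (m * s + 1) := by
  have hA1' := abs_le.mp hA1
  have hB1' := abs_le.mp hB1
  have hAm' := abs_le.mp hAm
  have hBn' := abs_le.mp hBn
  have hD' : 0 < m * s - A := lt_of_le_of_ne (by linarith [hAm'.2]) (Ne.symm hD)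
  have hd2 : (0:ℝ) < m * s + 1 := by nlinarith
  rw [ge_iff_le, div_le_div_iff₀ hd2 hD']
  rcases le_total (n * s) 1 with h | h
  · nlinarith [mul_le_mul_of_nonpos_right hAm'.2 (by linarith : n*s - 1 ≤ 0),
      mul_le_mul_of_nonneg_right hBn'.2 (by nlinarith : (0:ℝ) ≤ m*s + 1)]
  · nlinarith [mul_le_mul_of_nonneg_right hB1'.2 (by nlinarith : (0:ℝ) ≤ m*s + 1),
      mul_le_mul_of_nonpos_right hA1'.1 (by linarith : (1:ℝ) - n*s ≤ 0)]

theorem stmt_1 (m n : ℤ) (hmn : m > n) (hn2 : n ≥ 2) (hmodd : Odd m) (hneven : Even n)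
    (x : ℝ) (hx : (m : ℝ) * Real.sin x ≠ Real.sin (m * x)) :
    ((n : ℝ) * Real.sin (m * x) - (m : ℝ) * Real.sin (n * x)) /
        ((m : ℝ) * Real.sin x - Real.sin (m * x)) ≥
      -((m : ℝ) + n) / ((m : ℝ) * |Real.sin x| + 1) := by
  have hmR : (3:ℝ) ≤ (m:ℝ) := by exact_mod_cast (by omega : (3:ℤ) ≤ m)
  have hnR : (2:ℝ) ≤ (n:ℝ) := by exact_mod_cast hn2
  have hmc : ((m.toNat : ℕ) : ℝ) = (m : ℝ) := by
    exact_mod_cast congrArg (fun z : ℤ => (z : ℝ)) (Int.toNat_of_nonneg (by omega : (0:ℤ) ≤ m))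
  have hnc : ((n.toNat : ℕ) : ℝ) = (n : ℝ) := by
    exact_mod_cast congrArg (fun z : ℤ => (z : ℝ)) (Int.toNat_of_nonneg (by omega : (0:ℤ) ≤ n))
  have hAm : ∀ y : ℝ, |Real.sin ((m:ℝ) * y)| ≤ (m:ℝ) * |Real.sin y| := by
    intro y; rw [← hmc]; exact abs_sin_nat_mul_le _ y
  have hBn : ∀ y : ℝ, |Real.sin ((n:ℝ) * y)| ≤ (n:ℝ) * |Real.sin y| := by
    intro y; rw [← hnc]; exact abs_sin_nat_mul_le _ y
  rcases le_total 0 (Real.sin x) with hs | hs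
  · rw [abs_of_nonneg hs]
    refine key (m:ℝ) (n:ℝ) (Real.sin x) (Real.sin ((m:ℝ)*x)) (Real.sin ((n:ℝ)*x))
      hmR hnR hs (Real.abs_sin_le_one _) (Real.abs_sin_le_one _)
      ?_ ?_ (fun h => hx (by linarith))
    · have h0 := hAm x; rwa [abs_of_nonneg hs] at h0
    · have h0 := hBn x; rwa [abs_of_nonneg hs] at h0
  · rw [abs_of_nonpos hs]
    have hs' : 0 ≤ Real.sin (-x) := by rw [Real.sin_neg]; linarith
    have h := key (m:ℝ) (n:ℝ) (Real.sin (-x)) (Real.sin ((m:ℝ)*(-x))) (Real.sin ((n:ℝ)*(-x)))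
      hmR hnR hs' (Real.abs_sin_le_one _) (Real.abs_sin_le_one _)
      (by have h0 := hAm (-x); rwa [abs_of_nonneg hs'] at h0)
      (by have h0 := hBn (-x); rwa [abs_of_nonneg hs'] at h0)
      (by intro h; apply hx
          simp only [mul_neg, Real.sin_neg] at h; linarith)
    simp only [mul_neg, Real.sin_neg] at h
    have num : (n:ℝ) * Real.sin ((m:ℝ)*x) - (m:ℝ) * Real.sin ((n:ℝ)*x)
        = -(-( (n:ℝ) * Real.sin ((m:ℝ)*x)) - (m:ℝ) * -Real.sin ((n:ℝ)*x)) := by ring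
    have den : (m:ℝ) * Real.sin x - Real.sin ((m:ℝ)*x)
        = -((m:ℝ) * -Real.sin x - -Real.sin ((m:ℝ)*x)) := by ring
    rw [num, den, neg_div_neg_eq]
    convert h using 3 <;> ring
end

section
/- Let m and n be integers with m > n ≥ 2, m odd, n even, m ≥ 81 and 1/2 ≤ n/m ≤ 0.82. Then for every real number x with 5.78/m ≤ x ≤ π − 5.78/m and m·sin(x) ≠ sin(m·x), one has g(x) = (n·sin(m·x) − m·sin(n·x))/(m·sin(x) − sin(m·x)) ≥ −n(m² − n²)/(m² − 1). -/
/-!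
On `[5.78/m, π - 5.78/m]` we have `m sin x ≥ m sin (5.78/m) ≥ 5.78 - 5.78³/(6m²) > 1`, so the
denominator is positive. Bounding `sin (m x) ≥ -1` and `sin (n x) ≤ 1` reduces the claim to
`m² - 1 ≤ n (m - n) (m sin x + 1)`, which holds since `n (m - n) ≥ 0.18 · 0.82 · m²` and
`0.1476 · 6.78 > 1` leaves enough room for `m ≥ 81`.
-/

open Real

namespace Real

lemma sin_le_sin_of_le_of_le_pi_sub {x y : ℝ} (hy : 0 ≤ y) (hyx : y ≤ x) (hxy : x ≤ π - y) :
    sin y ≤ sin x := by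
  rcases le_total x (π / 2) with hx | hx
  · exact sin_le_sin_of_le_of_le_pi_div_two (by linarith [pi_pos]) hx hyx
  · rw [← sin_pi_sub x]
    exact sin_le_sin_of_le_of_le_pi_div_two (by linarith [pi_pos]) (by linarith) (by linarith)

lemma sub_cube_le_mul_sin {c M x : ℝ} (hc : 0 ≤ c) (hM : 0 < M) (hx₁ : c / M ≤ x)
    (hx₂ : x ≤ π - c / M) : c - c ^ 3 / (6 * M ^ 2) ≤ M * sin x := by
  have hcM : 0 ≤ c / M := div_nonneg hc hM.le
  calc c - c ^ 3 / (6 * M ^ 2) = M * (c / M - (c / M) ^ 3 / 6) := by field_simp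
    _ ≤ M * sin x := by
      gcongr
      exact (sin_ge_sub_cube hcM).trans (sin_le_sin_of_le_of_le_pi_sub hcM hx₁ hx₂)

end Real

lemma neg_div_le_div_of_le_mul {M N s a b : ℝ} (hM : 1 < M) (hN : 1 ≤ N) (ha : -1 ≤ a)
    (hb : b ≤ 1) (hD : a < M * s) (hkey : M ^ 2 - 1 ≤ N * (M - N) * (M * s + 1)) :
    -(N * (M ^ 2 - N ^ 2)) / (M ^ 2 - 1) ≤ (N * a - M * b) / (M * s - a) := by
  rw [div_le_div_iff₀ (by nlinarith) (by linarith)]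
  nlinarith [mul_nonneg (by nlinarith : 0 ≤ N * (N ^ 2 - 1)) (by linarith : 0 ≤ a + 1),
    mul_nonneg (by nlinarith : 0 ≤ M * (M ^ 2 - 1)) (by linarith : 0 ≤ 1 - b),
    mul_le_mul_of_nonneg_left hkey (by linarith : 0 ≤ M + N)]

theorem stmt_2_general (m n : ℤ)
    (hm81 : m ≥ 81) (hlo : (1/2 : ℝ) ≤ (n : ℝ) / m) (hhi : (n : ℝ) / m ≤ 0.82)
    (x : ℝ) (hx1 : 5.78 / m ≤ x) (hx2 : x ≤ π - 5.78 / m) :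
    ((n : ℝ) * Real.sin (m * x) - (m : ℝ) * Real.sin (n * x)) /
        ((m : ℝ) * Real.sin x - Real.sin (m * x)) ≥
      -((n : ℝ) * ((m : ℝ) ^ 2 - (n : ℝ) ^ 2)) / ((m : ℝ) ^ 2 - 1) := by
  have hm : (81 : ℝ) ≤ m := by exact_mod_cast hm81
  have hm0 : (0 : ℝ) < m := by linarith
  rw [le_div_iff₀ hm0] at hlo
  rw [div_le_iff₀ hm0] at hhi
  have hsin := sub_cube_le_mul_sin (by norm_num) hm0 hx1 hx2
  have hcube : (5.78 : ℝ) ^ 3 / (6 * (m : ℝ) ^ 2) * (m : ℝ) ^ 2 = 5.78 ^ 3 / 6 := by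
    field_simp
  have hsin_ge : 5 ≤ m * sin x := by
    have : (5.78 : ℝ) ^ 3 / (6 * (m : ℝ) ^ 2) ≤ 0.78 := by
      rw [div_le_iff₀ (by positivity)]; nlinarith
    linarith
  have hprod : 0.18 * 0.82 * (m : ℝ) ^ 2 ≤ n * (m - n) := by
    nlinarith [mul_nonneg (by linarith : (0 : ℝ) ≤ n - 0.18 * m)
      (by linarith : (0 : ℝ) ≤ 0.82 * m - n)]
  have hkey : (m : ℝ) ^ 2 - 1 ≤ n * (m - n) * (m * sin x + 1) := by
    nlinarith [mul_le_mul_of_nonneg_right hprod (by linarith : (0 : ℝ) ≤ m * sin x + 1),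
      mul_le_mul_of_nonneg_left hsin (sq_nonneg (m : ℝ))]
  exact neg_div_le_div_of_le_mul (by linarith) (by linarith) (neg_one_le_sin _) (sin_le_one _)
    (by linarith [sin_le_one (m * x)]) hkey

theorem stmt_2 (m n : ℤ) (hmn : m > n) (hn2 : n ≥ 2) (hmodd : Odd m) (hneven : Even n)
    (hm81 : m ≥ 81) (hlo : (1/2 : ℝ) ≤ (n : ℝ) / m) (hhi : (n : ℝ) / m ≤ 0.82)
    (x : ℝ) (hx1 : 5.78 / m ≤ x) (hx2 : x ≤ π - 5.78 / m)
    (hx : (m : ℝ) * Real.sin x ≠ Real.sin (m * x)) :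
    ((n : ℝ) * Real.sin (m * x) - (m : ℝ) * Real.sin (n * x)) /
        ((m : ℝ) * Real.sin x - Real.sin (m * x)) ≥
      -((n : ℝ) * ((m : ℝ) ^ 2 - (n : ℝ) ^ 2)) / ((m : ℝ) ^ 2 - 1) :=
  stmt_2_general m n hm81 hlo hhi x hx1 hx2
end

section
/- Let m and n be integers with m > n ≥ 2, m odd, n even, m ≥ 81 and 1/2 ≤ n/m ≤ 0.82. Then for every real number x with 0 ≤ x ≤ 5.78/m and m·sin(x) ≠ sin(m·x), one has g(x) = (n·sin(m·x) − m·sin(n·x))/(m·sin(x) − sin(m·x)) ≥ −n(m² − n²)/(m² − 1). -/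
open Real Finset Nat

/-!
After clearing denominators, `g x ≥ g 0` reads `0 ≤ gapNumerator m n x`, and the denominator
`m sin x - sin (m x)` is nonnegative because `|sin (k x)| ≤ k |sin x|`. The combination
`gapNumerator` of `sin x`, `sin (m x)`, `sin (n x)` has vanishing Taylor coefficients at `x` and
`x³`. For `m x ≤ 7/2` the alternating Taylor bounds for `sin` therefore leave a positive multiple
of `x⁵`. For `7/2 < m x ≤ 5.78` we only use `sin (m x) ≥ -1`; to leading order in `m` the claim
becomes `sin u ≤ a u - b` for `u = n x ∈ [7/4, 19/4]`, where `a ≤ 1 - (n/m)²` and `b ≥ (n/m)³`,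
and the degree-9 Taylor bound settles this with a margin `m³/200` that absorbs the lower-order
terms.
-/

lemma nonneg_of_hasDerivAt_nonneg {f f' : ℝ → ℝ} (hf : ∀ y, HasDerivAt f (f' y) y)
    (h0 : f 0 = 0) (hf' : ∀ y, 0 ≤ y → 0 ≤ f' y) {y : ℝ} (hy : 0 ≤ y) : 0 ≤ f y := by
  have hmono : MonotoneOn f (Set.Ici 0) :=
    monotoneOn_of_hasDerivWithinAt_nonneg (convex_Ici 0)
      (fun z _ ↦ (hf z).continuousAt.continuousWithinAt) (fun z _ ↦ (hf z).hasDerivWithinAt)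
      (fun z hz ↦ hf' z (interior_subset hz))
  simpa [h0] using hmono Set.self_mem_Ici hy hy

noncomputable def sinTaylor (n : ℕ) (y : ℝ) : ℝ :=
  ∑ i ∈ range n, (-1) ^ i * (y ^ (2 * i + 1) / (2 * i + 1)!)

noncomputable def cosTaylor (n : ℕ) (y : ℝ) : ℝ :=
  ∑ i ∈ range n, (-1) ^ i * (y ^ (2 * i) / (2 * i)!)

lemma hasDerivAt_pow_succ_div_factorial (k : ℕ) (y : ℝ) :
    HasDerivAt (fun z : ℝ ↦ z ^ (k + 1) / (k + 1)!) (y ^ k / k !) y := by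
  refine ((hasDerivAt_pow (k + 1) y).div_const _).congr_deriv ?_
  rw [factorial_succ, add_tsub_cancel_right]; push_cast
  field_simp

lemma hasDerivAt_sinTaylor (n : ℕ) (y : ℝ) : HasDerivAt (sinTaylor n) (cosTaylor n y) y := by
  unfold sinTaylor cosTaylor
  exact HasDerivAt.fun_sum fun i _ ↦ (hasDerivAt_pow_succ_div_factorial (2 * i) y).const_mul _

lemma cosTaylor_succ (n : ℕ) (y : ℝ) :
    cosTaylor (n + 1) y = 1 - ∑ i ∈ range n, (-1) ^ i * (y ^ (2 * (i + 1)) / (2 * (i + 1))!) := by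
  simp [cosTaylor, sum_range_succ', pow_succ]
  ring

lemma hasDerivAt_cosTaylor_succ (n : ℕ) (y : ℝ) :
    HasDerivAt (cosTaylor (n + 1)) (-sinTaylor n y) y := by
  rw [funext (cosTaylor_succ n), sinTaylor]
  exact (HasDerivAt.fun_sum fun i _ ↦
    ((hasDerivAt_pow_succ_div_factorial (2 * i + 1) y).const_mul ((-1) ^ i))).const_sub 1

theorem cos_sin_taylor_alternating (n : ℕ) {y : ℝ} (hy : 0 ≤ y) :
    0 ≤ (-1) ^ n * (cosTaylor (n + 1) y - cos y) ∧
      0 ≤ (-1) ^ n * (sinTaylor (n + 1) y - sin y) := by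
  induction n generalizing y with
  | zero => simpa [cosTaylor, sinTaylor] using ⟨cos_le_one y, sin_le hy⟩
  | succ n ih =>
    have hcos : ∀ z, 0 ≤ z → 0 ≤ (-1) ^ (n + 1) * (cosTaylor (n + 2) z - cos z) := by
      refine fun z hz ↦ nonneg_of_hasDerivAt_nonneg
        (fun w ↦ ((hasDerivAt_cosTaylor_succ (n + 1) w).sub (hasDerivAt_cos w)).const_mul _)
        (by simp [cosTaylor_succ]) (fun w hw ↦ ?_) hz
      linarith [(ih hw).2, show (-1 : ℝ) ^ (n + 1) * (-sinTaylor (n + 1) w - -sin w) =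
        (-1) ^ n * (sinTaylor (n + 1) w - sin w) by ring]
    exact ⟨hcos y hy, nonneg_of_hasDerivAt_nonneg
      (fun w ↦ ((hasDerivAt_sinTaylor (n + 2) w).sub (hasDerivAt_sin w)).const_mul _)
      (by simp [sinTaylor]) hcos hy⟩

lemma sin_le_taylor_five {y : ℝ} (hy : 0 ≤ y) : sin y ≤ y - y ^ 3 / 6 + y ^ 5 / 120 := by
  have := (cos_sin_taylor_alternating 2 hy).2
  norm_num [sinTaylor, sum_range_succ, factorial] at this
  linarith

lemma taylor_seven_le_sin {y : ℝ} (hy : 0 ≤ y) :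
    y - y ^ 3 / 6 + y ^ 5 / 120 - y ^ 7 / 5040 ≤ sin y := by
  have := (cos_sin_taylor_alternating 3 hy).2
  norm_num [sinTaylor, sum_range_succ, factorial] at this
  linarith

lemma sin_le_taylor_nine {y : ℝ} (hy : 0 ≤ y) :
    sin y ≤ y - y ^ 3 / 6 + y ^ 5 / 120 - y ^ 7 / 5040 + y ^ 9 / 362880 := by
  have := (cos_sin_taylor_alternating 4 hy).2
  norm_num [sinTaylor, sum_range_succ, factorial] at this
  linarith

lemma sin_le_linear_of_mem_Icc {u : ℝ} (h₁ : 287 / 100 ≤ u) (h₂ : u ≤ 19 / 4) :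
    sin u ≤ 819 / 2500 * u - 68921 / 125000 - 1 / 200 := by
  have hv₁ : 82369 / 10000 ≤ u ^ 2 := by nlinarith
  have hv₂ : u ^ 2 ≤ 361 / 16 := by nlinarith
  -- `(819/2500 u - P₉ u) / u ≥ 1/5`, with `P₉` the Taylor polynomial of `sin` of degree 9
  have hq : 1 / 5 ≤ u ^ 2 / 6 - (u ^ 2) ^ 2 / 120 + (u ^ 2) ^ 3 / 5040 - (u ^ 2) ^ 4 / 362880
      - 1681 / 2500 := by
    nlinarith [mul_nonneg (sub_nonneg.2 hv₁) (sub_nonneg.2 hv₂), sq_nonneg (u ^ 2 - 15),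
      mul_nonneg (mul_nonneg (sub_nonneg.2 hv₁) (sub_nonneg.2 hv₂)) (sub_nonneg.2 hv₁),
      mul_nonneg (mul_nonneg (sub_nonneg.2 hv₁) (sub_nonneg.2 hv₂)) (sub_nonneg.2 hv₂)]
  linarith [sin_le_taylor_nine (by linarith : (0 : ℝ) ≤ u),
    mul_le_mul h₁ hq (by norm_num) (by linarith)]

lemma sin_le_cubic_of_mem_Icc {u : ℝ} (h₁ : 7 / 4 ≤ u) (h₂ : u ≤ 287 / 100) :
    sin u ≤ (1 - 4 * u ^ 2 / 49) * u - 8 * u ^ 3 / 343 - 1 / 200 := by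
  have hv₁ : 49 / 16 ≤ u ^ 2 := by nlinarith
  have hv₂ : u ^ 2 ≤ 82369 / 10000 := by nlinarith
  -- `((1 - 4u²/49) u - 8u³/343 - P₉ u) / u³ ≥ 1/500`
  have hq : 1 / 500 ≤ 127 / 2058 - u ^ 2 / 120 + (u ^ 2) ^ 2 / 5040 - (u ^ 2) ^ 3 / 362880 := by
    nlinarith [mul_nonneg (sub_nonneg.2 hv₁) (sub_nonneg.2 hv₂), sq_nonneg (u ^ 2 - 6),
      mul_nonneg (mul_nonneg (sub_nonneg.2 hv₁) (sub_nonneg.2 hv₂)) (sub_nonneg.2 hv₁),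
      mul_nonneg (mul_nonneg (sub_nonneg.2 hv₁) (sub_nonneg.2 hv₂)) (sub_nonneg.2 hv₂)]
  have hu3 : (7 / 4) ^ 3 ≤ u ^ 3 := pow_le_pow_left₀ (by norm_num) h₁ 3
  linarith [sin_le_taylor_nine (by linarith : (0 : ℝ) ≤ u),
    mul_le_mul hu3 hq (by norm_num) (by positivity)]

lemma abs_sin_natCast_mul_le (k : ℕ) (x : ℝ) : |sin (k * x)| ≤ k * |sin x| := by
  induction k with
  | zero => simp
  | succ k ih =>
    calc |sin ((k + 1 : ℕ) * x)| = |sin (k * x) * cos x + cos (k * x) * sin x| := by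
          push_cast; rw [add_mul, one_mul, sin_add]
      _ ≤ |sin (k * x)| * |cos x| + |cos (k * x)| * |sin x| := by
          simpa only [abs_mul] using abs_add_le (sin (k * x) * cos x) (cos (k * x) * sin x)
      _ ≤ |sin (k * x)| * 1 + 1 * |sin x| := by
          gcongr <;> exact abs_cos_le_one _
      _ ≤ (k + 1 : ℕ) * |sin x| := by push_cast; linarith

/-- `(m² - 1) (m sin x - sin (m x)) (g x - g 0)`. -/
noncomputable def gapNumerator (m n x : ℝ) : ℝ :=
  n * (m ^ 2 - n ^ 2) * (m * sin x) + n * (n ^ 2 - 1) * sin (m * x) - m * (m ^ 2 - 1) * sin (n * x)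

section
variable {m n x : ℝ}

lemma gapNumerator_nonneg_of_mul_le (hm : 81 ≤ m) (h2n : m ≤ 2 * n) (hnm : 50 * n ≤ 41 * m)
    (hx : 0 ≤ x) (ht : m * x ≤ 7 / 2) : 0 ≤ gapNumerator m n x := by
  have hcoeff :
      7 * (n ^ 2 - 1) * m ^ 4 ≤ 24 * ((m ^ 2 - n ^ 2) * (m ^ 2 * n ^ 2 - m ^ 2 - n ^ 2)) := by
    have ha : 819 / 2500 * m ^ 2 ≤ m ^ 2 - n ^ 2 := by nlinarith
    have hb : (1 - 1 / 1640 - 1 / 6561) * (m ^ 2 * n ^ 2) ≤ m ^ 2 * n ^ 2 - m ^ 2 - n ^ 2 := by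
      have hn2 : 1640 ≤ n ^ 2 := by nlinarith
      have hm2 : 6561 ≤ m ^ 2 := by nlinarith
      nlinarith [mul_le_mul_of_nonneg_left hn2 (sq_nonneg m),
        mul_le_mul_of_nonneg_left hm2 (sq_nonneg n)]
    nlinarith [mul_le_mul ha hb (by positivity) (by nlinarith)]
  have hm0 : 0 ≤ m := by linarith
  have hn0 : 0 ≤ n := by linarith
  have hA : 0 ≤ n * (m ^ 2 - n ^ 2) * m := mul_nonneg (mul_nonneg hn0 (by nlinarith)) hm0
  have hB : 0 ≤ n * (n ^ 2 - 1) := mul_nonneg hn0 (by nlinarith)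
  have hC : 0 ≤ m * (m ^ 2 - 1) := mul_nonneg hm0 (by nlinarith)
  have ht2 : (m * x) ^ 2 ≤ 49 / 4 := by nlinarith [mul_nonneg hm0 hx]
  have hpoly : 0 ≤ x ^ 5 *
      (m * n * (24 * ((m ^ 2 - n ^ 2) * (m ^ 2 * n ^ 2 - m ^ 2 - n ^ 2)) - 7 * (n ^ 2 - 1) * m ^ 4)
        / 2880 + n * (n ^ 2 - 1) * m ^ 5 * (49 / 4 - (m * x) ^ 2) / 5040) :=
    mul_nonneg (pow_nonneg hx 5) <| add_nonneg
      (div_nonneg (mul_nonneg (mul_nonneg hm0 hn0) (sub_nonneg.2 hcoeff)) (by norm_num))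
      (div_nonneg (mul_nonneg (mul_nonneg hB (pow_nonneg hm0 5)) (sub_nonneg.2 ht2)) (by norm_num))
  unfold gapNumerator
  linarith [mul_le_mul_of_nonneg_left (sin_ge_sub_cube hx) hA,
    mul_le_mul_of_nonneg_left (taylor_seven_le_sin (y := m * x) (mul_nonneg (by linarith) hx)) hB,
    mul_le_mul_of_nonneg_left (sin_le_taylor_five (y := n * x) (mul_nonneg (by linarith) hx)) hC]

lemma gapNumerator_nonneg_of_sin_le {a b : ℝ} (hm : 81 ≤ m) (hn : 1 ≤ n) (hnm : n ≤ m)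
    (hx : 0 ≤ x) (ht : m * x ≤ 289 / 50) (hu : n * x ≤ 19 / 4) (ha : a * m ^ 2 ≤ m ^ 2 - n ^ 2)
    (hb : n * (n ^ 2 - 1) ≤ b * m ^ 3) (hsin : sin (n * x) ≤ a * (n * x) - b - 1 / 200) :
    0 ≤ gapNumerator m n x := by
  have hm0 : 0 ≤ m := by linarith
  have hmu : 0 ≤ m * (n * x) := mul_nonneg hm0 (mul_nonneg (by linarith) hx)
  have hA : 0 ≤ n * (m ^ 2 - n ^ 2) * m := mul_nonneg (mul_nonneg (by linarith) (by nlinarith)) hm0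
  have hB : 0 ≤ n * (n ^ 2 - 1) := mul_nonneg (by linarith) (by nlinarith)
  have hlin : a * m ^ 3 * (n * x) ≤ n * (m ^ 2 - n ^ 2) * m * x := by
    nlinarith [mul_le_mul_of_nonneg_right ha hmu]
  have hcube : n * (m ^ 2 - n ^ 2) * m * x ^ 3 ≤ m * (n * x) * (m * x) ^ 2 := by
    nlinarith [mul_nonneg (mul_nonneg hmu (sq_nonneg n)) (sq_nonneg x)]
  have hcube_le : m * (n * x) * (m * x) ^ 2 ≤ m * (19 / 4) * (289 / 50) ^ 2 := by
    have ht0 : 0 ≤ m * x := mul_nonneg hm0 hx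
    exact mul_le_mul (mul_le_mul_of_nonneg_left hu hm0) (pow_le_pow_left₀ ht0 ht 2) (sq_nonneg _)
      (by positivity)
  have hsinu : m * (m ^ 2 - 1) * sin (n * x) ≤ m ^ 3 * (a * (n * x) - b - 1 / 200) + m := by
    nlinarith [mul_le_mul_of_nonneg_left hsin (pow_nonneg hm0 3), neg_one_le_sin (n * x)]
  have hm3 : 6561 * m ≤ m ^ 3 := by nlinarith
  unfold gapNumerator
  linarith [mul_le_mul_of_nonneg_left (sin_ge_sub_cube hx) hA,
    mul_le_mul_of_nonneg_left (neg_one_le_sin (m * x)) hB]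

lemma gapNumerator_nonneg (hm : 81 ≤ m) (h2n : m ≤ 2 * n) (hnm : 50 * n ≤ 41 * m)
    (hx : 0 ≤ x) (ht : m * x ≤ 289 / 50) : 0 ≤ gapNumerator m n x := by
  rcases le_or_gt (m * x) (7 / 2) with hsmall | hlarge
  · exact gapNumerator_nonneg_of_mul_le hm h2n hnm hx hsmall
  have hu₁ : 7 / 4 ≤ n * x := by nlinarith
  have hu₂ : n * x ≤ 19 / 4 := by nlinarith
  rcases le_or_gt (287 / 100) (n * x) with hhi | hlo
  · refine gapNumerator_nonneg_of_sin_le (a := 819 / 2500) (b := 68921 / 125000) hm (by linarith)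
      (by linarith) hx ht hu₂ (by nlinarith) ?_ (sin_le_linear_of_mem_Icc hhi hu₂)
    linarith [pow_le_pow_left₀ (by linarith) hnm 3]
  · have h7 : 7 * n ≤ 2 * m * (n * x) := by nlinarith
    refine gapNumerator_nonneg_of_sin_le
      (a := 1 - 4 * (n * x) ^ 2 / 49) (b := 8 * (n * x) ^ 3 / 343)
      hm (by linarith) (by linarith) hx ht hu₂ ?_ ?_ (sin_le_cubic_of_mem_Icc hu₁ hlo.le)
    · nlinarith [pow_le_pow_left₀ (by linarith) h7 2]
    · nlinarith [pow_le_pow_left₀ (by linarith) h7 3]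

end

theorem stmt_3_general (m n : ℤ)
    (hm81 : m ≥ 81) (hlo : (1/2 : ℝ) ≤ (n : ℝ) / m) (hhi : (n : ℝ) / m ≤ 0.82)
    (x : ℝ) (hx1 : 0 ≤ x) (hx2 : x ≤ 5.78 / m)
    (hx : (m : ℝ) * Real.sin x ≠ Real.sin (m * x)) :
    ((n : ℝ) * Real.sin (m * x) - (m : ℝ) * Real.sin (n * x)) /
        ((m : ℝ) * Real.sin x - Real.sin (m * x)) ≥
      -((n : ℝ) * ((m : ℝ) ^ 2 - (n : ℝ) ^ 2)) / ((m : ℝ) ^ 2 - 1) := by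
  have hm : (81 : ℝ) ≤ m := by exact_mod_cast hm81
  have hm0 : (0 : ℝ) < m := by linarith
  rw [le_div_iff₀ hm0] at hlo hx2
  rw [div_le_iff₀ hm0] at hhi
  have hD : 0 < (m : ℝ) * sin x - sin (m * x) := by
    have hxπ : x ≤ π := by nlinarith [pi_gt_three]
    obtain ⟨k, rfl⟩ := Int.eq_ofNat_of_zero_le (by omega : 0 ≤ m)
    have hsin := (le_abs_self _).trans (abs_sin_natCast_mul_le k x)
    rw [abs_of_nonneg (sin_nonneg_of_nonneg_of_le_pi hx1 hxπ)] at hsin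
    push_cast at hx ⊢
    exact sub_pos.2 (lt_of_le_of_ne hsin (Ne.symm hx))
  have hE := gapNumerator_nonneg (n := n) hm (by linarith) (by norm_num at hhi; linarith) hx1
    (by norm_num at hx2; linarith)
  rw [ge_iff_le, div_le_div_iff₀ (by nlinarith) hD]
  unfold gapNumerator at hE
  linarith

theorem stmt_3 (m n : ℤ) (hmn : m > n) (hn2 : n ≥ 2) (hmodd : Odd m) (hneven : Even n)
    (hm81 : m ≥ 81) (hlo : (1/2 : ℝ) ≤ (n : ℝ) / m) (hhi : (n : ℝ) / m ≤ 0.82)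
    (x : ℝ) (hx1 : 0 ≤ x) (hx2 : x ≤ 5.78 / m)
    (hx : (m : ℝ) * Real.sin x ≠ Real.sin (m * x)) :
    ((n : ℝ) * Real.sin (m * x) - (m : ℝ) * Real.sin (n * x)) /
        ((m : ℝ) * Real.sin x - Real.sin (m * x)) ≥
      -((n : ℝ) * ((m : ℝ) ^ 2 - (n : ℝ) ^ 2)) / ((m : ℝ) ^ 2 - 1) :=
  stmt_3_general m n hm81 hlo hhi x hx1 hx2 hx
end

section
/- Let m and n be integers with m > n ≥ 2, m odd and n even, and suppose 0 < x < π and sin(x) ≥ 1/n. Then m·sin(n·x) − n·sin(m·x) + sin(n·x)/sin(x) + sin(m·x)/sin(x) ≤ m + n. -/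
open Real

theorem stmt_6 (m n : ℤ) (hmn : m > n) (hn2 : n ≥ 2) (hmodd : Odd m) (hneven : Even n)
    (x : ℝ) (hx0 : 0 < x) (hxpi : x < π) (hsin : Real.sin x ≥ 1 / n) :
    (m : ℝ) * Real.sin (n * x) - (n : ℝ) * Real.sin (m * x) +
        Real.sin (n * x) / Real.sin x + Real.sin (m * x) / Real.sin x ≤
      (m : ℝ) + n := by
  have hs : 0 < Real.sin x := Real.sin_pos_of_pos_of_lt_pi hx0 hxpi
  have hn0 : (0:ℝ) < n := by
    have : (2:ℝ) ≤ n := by exact_mod_cast hn2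
    linarith
  have hmn' : (n:ℝ) < m := by exact_mod_cast hmn
  have h1 : 1 / Real.sin x ≤ n := by
    rw [div_le_iff₀ hs]
    rw [ge_iff_le, div_le_iff₀ hn0] at hsin
    linarith
  have ha : Real.sin (n*x) ≤ 1 := Real.sin_le_one _
  have hb : -1 ≤ Real.sin (m*x) := Real.neg_one_le_sin _
  have hinv : 0 < 1 / Real.sin x := by positivity
  have key : (m : ℝ) * Real.sin (n * x) - (n : ℝ) * Real.sin (m * x) +
        Real.sin (n * x) / Real.sin x + Real.sin (m * x) / Real.sin x
      = Real.sin (n*x) * ((m:ℝ) + 1 / Real.sin x)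
        + Real.sin (m*x) * (1 / Real.sin x - n) := by
    field_simp
    ring
  rw [key]
  nlinarith [mul_nonneg (sub_nonneg.2 ha) (by linarith : (0:ℝ) ≤ (m:ℝ) + 1 / Real.sin x),
    mul_nonneg (by linarith : (0:ℝ) ≤ Real.sin (m*x) + 1) (by linarith : (0:ℝ) ≤ (n:ℝ) - 1 / Real.sin x)]
end

section
/- For every real number x with 0 ≤ x ≤ 5.78, one has sin(x) ≥ x − x³/3! + x⁵/5! − x⁷/7! + x⁹/482800. -/
/-!
Partial sums of an alternating series with an even number of terms are lower bounds for its sum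
as soon as the terms decrease from that point on. For the sine series at `0 ≤ x ≤ 5.78` the terms
`x ^ (2i+1) / (2i+1)!` decrease from `i = 10` on, because `x² ≤ 22 · 23`, so `sin x` dominates
the ten-term partial sum. That sum differs from the claimed bound by `x⁹ (p(x²) - 1/482800)`,
where the quintic `p` stays above `1/482800` on `[0, 5.78²]`.
-/

open Real Finset
open scoped Nat

section

variable {E : Type*} [Ring E] [PartialOrder E] [IsOrderedRing E] [TopologicalSpace E]
  [IsTopologicalAddGroup E] [OrderClosedTopology E]

theorem HasSum.sum_range_two_mul_le_of_antitone_tail {f : ℕ → E} {l : E}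
    (hl : HasSum (fun i ↦ (-1) ^ i * f i) l) (k : ℕ) (hfa : Antitone fun i ↦ f (i + 2 * k)) :
    ∑ i ∈ range (2 * k), (-1) ^ i * f i ≤ l := by
  have htail : HasSum (fun i ↦ (-1) ^ i * f (i + 2 * k))
      (l - ∑ i ∈ range (2 * k), (-1) ^ i * f i) := by
    simpa [pow_add, pow_mul] using (hasSum_nat_add_iff' (2 * k)).mpr hl
  simpa using hfa.alternating_series_le_tendsto htail.tendsto_sum_nat 0

end

theorem pow_add_two_div_factorial (x : ℝ) (m : ℕ) :
    x ^ (m + 2) / (m + 2)! = x ^ m / m ! * (x ^ 2 / ((m + 1) * (m + 2))) := by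
  rw [Nat.factorial_succ, Nat.factorial_succ]
  push_cast
  field_simp
  ring

theorem antitone_pow_div_factorial_add_two_mul {x : ℝ} (hx : 0 ≤ x) {n : ℕ}
    (hxn : x ^ 2 ≤ (n + 1) * (n + 2)) : Antitone fun i : ℕ ↦ x ^ (n + 2 * i) / (n + 2 * i)! := by
  refine antitone_nat_of_succ_le fun i ↦ ?_
  have hratio : x ^ 2 / ((n + 2 * i + 1) * (n + 2 * i + 2)) ≤ 1 := by
    rw [div_le_one (by positivity)]
    refine hxn.trans ?_
    gcongr <;> norm_cast <;> omega
  rw [show n + 2 * (i + 1) = n + 2 * i + 2 by ring, pow_add_two_div_factorial]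
  push_cast at hratio ⊢
  exact mul_le_of_le_one_right (by positivity) hratio

theorem Real.sum_range_two_mul_le_sin {x : ℝ} (hx : 0 ≤ x) {k : ℕ}
    (hxk : x ^ 2 ≤ (4 * k + 2) * (4 * k + 3)) :
    ∑ i ∈ range (2 * k), (-1) ^ i * x ^ (2 * i + 1) / (2 * i + 1)! ≤ sin x := by
  have hsin : HasSum (fun i ↦ (-1) ^ i * (x ^ (2 * i + 1) / (2 * i + 1)!)) (sin x) := by
    simpa only [mul_div_assoc] using hasSum_sin x
  simp only [mul_div_assoc]
  refine hsin.sum_range_two_mul_le_of_antitone_tail k ?_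
  have hexp (i : ℕ) : 2 * (i + 2 * k) + 1 = 4 * k + 1 + 2 * i := by ring
  simpa only [hexp] using
    antitone_pow_div_factorial_add_two_mul hx (n := 4 * k + 1) (by push_cast; linarith)

/-- `33.4084 = 5.78 ^ 2`; the polynomial is the ten-term sine partial sum from `x⁹` on,
divided by `x⁹` and written in `t = x²`. -/
theorem one_div_482800_le_sin_partial_sum_tail (t : ℝ) (ht0 : 0 ≤ t) (ht1 : t ≤ 33.4084) :
    1 / 482800 ≤ 1 / 362880 - t / 39916800 + t ^ 2 / 6227020800 - t ^ 3 / 1307674368000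
      + t ^ 4 / 355687428096000 - t ^ 5 / 121645100408832000 := by
  have hs : 0 ≤ 33.4084 - t := by linarith
  nlinarith [mul_nonneg hs ht0, mul_nonneg (mul_nonneg hs ht0) ht0,
    mul_nonneg (mul_nonneg (mul_nonneg hs ht0) ht0) ht0,
    mul_nonneg (mul_nonneg (mul_nonneg (mul_nonneg hs ht0) ht0) ht0) ht0]

theorem stmt_8 (x : ℝ) (hx0 : 0 ≤ x) (hx1 : x ≤ 5.78) :
    Real.sin x ≥ x - x ^ 3 / 6 + x ^ 5 / 120 - x ^ 7 / 5040 + x ^ 9 / 482800 := by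
  have hx2 : x ^ 2 ≤ 33.4084 := by nlinarith
  have hS := Real.sum_range_two_mul_le_sin hx0 (k := 5) (by push_cast; linarith)
  have hS_eq : ∑ i ∈ range (2 * 5), (-1) ^ i * x ^ (2 * i + 1) / (2 * i + 1)! =
      x - x ^ 3 / 6 + x ^ 5 / 120 - x ^ 7 / 5040 + x ^ 9 * (1 / 362880 - x ^ 2 / 39916800
        + (x ^ 2) ^ 2 / 6227020800 - (x ^ 2) ^ 3 / 1307674368000
        + (x ^ 2) ^ 4 / 355687428096000 - (x ^ 2) ^ 5 / 121645100408832000) := by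
    norm_num [sum_range_succ, Nat.factorial]
    ring
  have htail := mul_le_mul_of_nonneg_left
    (one_div_482800_le_sin_partial_sum_tail (x ^ 2) (sq_nonneg x) hx2) (pow_nonneg hx0 9)
  rw [hS_eq] at hS
  linarith
end

section
/- Let m ≥ 5 be an integer and let x be a real number with 0 ≤ x ≤ 5.78/m. Define s₁(t) = t − t³/3! + t⁵/5! − t⁷/7! + t⁹/482800 and s₂(t) = t − t³/3! + t⁵/5! − t⁷/7! + t⁹/9!. Then m·s₁(x) − s₂(m·x) ≥ 0. -/
open Real

noncomputable def s₁ (t : ℝ) : ℝ := t - t ^ 3 / 6 + t ^ 5 / 120 - t ^ 7 / 5040 + t ^ 9 / 482800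

noncomputable def s₂ (t : ℝ) : ℝ := t - t ^ 3 / 6 + t ^ 5 / 120 - t ^ 7 / 5040 + t ^ 9 / 362880

lemma hv (v : ℝ) (h0 : 0 ≤ v) (h1 : v ≤ 33.4084) :
    4/25 - v/120 + (15624/15625)*v^2/5040 - v^3/362880 ≥ 0 := by
  nlinarith [sq_nonneg (v - 19.3), mul_nonneg (sub_nonneg.2 h1) (sq_nonneg (v - 19.3)), mul_nonneg h0 (sq_nonneg (v-19.3)), sq_nonneg v, mul_nonneg (sub_nonneg.2 h1) h0]

theorem stmt_9 (m : ℤ) (hm : m ≥ 5) (x : ℝ) (hx0 : 0 ≤ x) (hx1 : x ≤ 5.78 / m) :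
    (m : ℝ) * s₁ x - s₂ (m * x) ≥ 0 := by
  have ha : (5:ℝ) ≤ (m:ℝ) := by exact_mod_cast hm
  have ha0 : (0:ℝ) < (m:ℝ) := by linarith
  set a : ℝ := (m:ℝ) with hadef
  have hu : a * x ≤ 5.78 := by
    have := (le_div_iff₀ ha0).mp hx1; linarith
  have hu0 : 0 ≤ a * x := mul_nonneg (le_of_lt ha0) hx0
  have hv2 : (a*x)^2 ≤ 33.4084 := by nlinarith
  have h1 : 4/25 - (a*x)^2/120 + (15624/15625)*((a*x)^2)^2/5040 - ((a*x)^2)^3/362880 ≥ 0 :=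
    hv _ (sq_nonneg _) hv2
  have h2 : a^3 * x^3 * (4/25 - (a*x)^2/120 + (15624/15625)*((a*x)^2)^2/5040 - ((a*x)^2)^3/362880) ≥ 0 := by
    apply mul_nonneg _ h1
    positivity
  have ha2 : a^2 - 25 ≥ 0 := by nlinarith
  have ha6 : a^6 - 15625 ≥ 0 := by nlinarith [sq_nonneg a, sq_nonneg (a^2-25), sq_nonneg (a^3 - 125)]
  have t1 : x^3 * (a*(a^2-25)) ≥ 0 := by positivity
  have t3 : x^7 * (a*(a^6-15625)) ≥ 0 := by positivity
  have t5 : x^5 * a ≥ 0 := by positivity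
  have t9 : x^9 * a ≥ 0 := by positivity
  simp only [s₁, s₂]
  nlinarith [h2, t1, t3, t5, t9]
end

section
/- Let m ≥ 81 be an integer, let λ be a real number with 0.5 ≤ λ ≤ 0.82, and let y be a real number with 0 ≤ y ≤ 5.78². Define φ(y) = (1/(482800·m⁶) − 1/9!)·y²/(m²−1) + ((m²+1)/(7!·m⁴))·y − 1/(5!·m²) and ψ(y) = (1/482800 − (λ⁸−λ²+1)/9!)·y²/(1−λ²) − (λ²(1+λ²)/7!)·y + λ²/5!. Then φ(y) + ψ(y) ≥ 0. -/
open Real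

theorem auxP_stmt10 (t y : ℝ) (h1 : 1/4 ≤ t) (h2 : t ≤ 1681/2500)
    (h3 : 0 ≤ y) (h4 : y ≤ 83521/2500) :
    0 ≤ (1/482800 - (t^4 - t + 1)/362880) * y^2 +
      (1 - t) * (-(t*(1+t))/5040 * y + t/120 - 6287109058163/3615373440000000000) := by
  nlinarith [mul_nonneg (sub_nonneg.2 h1) (sub_nonneg.2 h2), mul_nonneg h3 (sub_nonneg.2 h4),
    mul_nonneg (sub_nonneg.2 h1) h3, mul_nonneg (sub_nonneg.2 h1) (sub_nonneg.2 h4),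
    mul_nonneg (sub_nonneg.2 h2) h3, mul_nonneg (sub_nonneg.2 h2) (sub_nonneg.2 h4),
    sq_nonneg (t - 1/4), sq_nonneg y, sq_nonneg (y - 83521/2500), sq_nonneg t,
    mul_nonneg (mul_nonneg (sub_nonneg.2 h1) (sub_nonneg.2 h2)) (sq_nonneg y),
    mul_nonneg (mul_nonneg h3 (sub_nonneg.2 h4)) (sq_nonneg t)]

theorem stmt_10 (m : ℤ) (hm : m ≥ 81) (l : ℝ) (hl0 : 0.5 ≤ l) (hl1 : l ≤ 0.82)
    (y : ℝ) (hy0 : 0 ≤ y) (hy1 : y ≤ 5.78 ^ 2) :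
    ((1 / (482800 * (m : ℝ) ^ 6) - 1 / 362880) * y ^ 2 / ((m : ℝ) ^ 2 - 1) +
        ((m : ℝ) ^ 2 + 1) / (5040 * (m : ℝ) ^ 4) * y - 1 / (120 * (m : ℝ) ^ 2)) +
      ((1 / 482800 - (l ^ 8 - l ^ 2 + 1) / 362880) * y ^ 2 / (1 - l ^ 2) -
        l ^ 2 * (1 + l ^ 2) / 5040 * y + l ^ 2 / 120) ≥ 0 := by
  have hm' : (81:ℝ) ≤ (m:ℝ) := by exact_mod_cast hm
  have hm2 : (6561:ℝ) ≤ (m:ℝ)^2 := by nlinarith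
  have hm2' : (6560:ℝ) ≤ (m:ℝ)^2 - 1 := by linarith
  have hmd : (0:ℝ) < (m:ℝ)^2 - 1 := by linarith
  have hm6 : (0:ℝ) < (m:ℝ)^6 := by positivity
  have hm4 : (0:ℝ) < (m:ℝ)^4 := by positivity
  have hY : y ≤ 83521/2500 := by norm_num at hy1 ⊢; linarith
  have hy2 : y^2 ≤ (83521/2500:ℝ)^2 := by nlinarith
  -- Step A : the m-part is at least -C
  have hA : ((1 / (482800 * (m : ℝ) ^ 6) - 1 / 362880) * y ^ 2 / ((m : ℝ) ^ 2 - 1) +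
        ((m : ℝ) ^ 2 + 1) / (5040 * (m : ℝ) ^ 4) * y - 1 / (120 * (m : ℝ) ^ 2)) ≥
        -(6287109058163/3615373440000000000) := by
    have h1 : (1 / (482800 * (m : ℝ) ^ 6) - 1 / 362880) * y ^ 2 / ((m : ℝ) ^ 2 - 1) ≥
        -((83521/2500:ℝ)^2/(362880*6560)) := by
      rw [ge_iff_le, le_div_iff₀ hmd]
      have hpos : 0 ≤ 1 / (482800 * (m:ℝ)^6) * y^2 := by positivity
      nlinarith [hpos, hy2, hm2']
    have h2 : ((m : ℝ) ^ 2 + 1) / (5040 * (m : ℝ) ^ 4) * y ≥ 0 := by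
      apply mul_nonneg _ hy0
      positivity
    have h3 : 1 / (120 * (m:ℝ)^2) ≤ 1/787320 := by
      apply one_div_le_one_div_of_le (by norm_num)
      linarith
    rw [ge_iff_le]
    have : -(6287109058163/3615373440000000000:ℝ) =
        -((83521/2500:ℝ)^2/(362880*6560)) + 0 - 1/787320 := by norm_num
    rw [this]
    gcongr <;> linarith
  -- Step B : the lambda-part is at least C
  have ht0 : 1/4 ≤ l^2 := by nlinarith
  have ht1 : l^2 ≤ 1681/2500 := by nlinarith
  have hd : (0:ℝ) < 1 - l^2 := by nlinarith
  have hB : ((1 / 482800 - (l ^ 8 - l ^ 2 + 1) / 362880) * y ^ 2 / (1 - l ^ 2) -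
        l ^ 2 * (1 + l ^ 2) / 5040 * y + l ^ 2 / 120) ≥
        6287109058163/3615373440000000000 := by
    rw [ge_iff_le, ← sub_nonneg]
    have hrw : ((1 / 482800 - (l ^ 8 - l ^ 2 + 1) / 362880) * y ^ 2 / (1 - l ^ 2) -
        l ^ 2 * (1 + l ^ 2) / 5040 * y + l ^ 2 / 120) - 6287109058163/3615373440000000000
        = ((1/482800 - ((l^2)^4 - l^2 + 1)/362880) * y^2 +
          (1 - l^2) * (-((l^2)*(1+l^2))/5040 * y + l^2/120 - 6287109058163/3615373440000000000))
          / (1 - l^2) := by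
      field_simp
      ring
    rw [hrw]
    exact div_nonneg (auxP_stmt10 (l^2) y ht0 ht1 hy0 hY) hd.le
  linarith [hA, hB]
end

section
/- Let m ≥ 3 be an integer, let λ be a real number with 0.5 ≤ λ ≤ 0.82, and let y be a real number with 0 ≤ y ≤ 2.8². Then 2 − (λ²/3)·y − ((1−λ²)·m²/(120·(m²−1)))·y² ≥ 0. -/
open Real

theorem stmt_13 (m : ℤ) (hm : m ≥ 3) (l : ℝ) (hl0 : 0.5 ≤ l) (hl1 : l ≤ 0.82)
    (y : ℝ) (hy0 : 0 ≤ y) (hy1 : y ≤ 2.8 ^ 2) :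
    2 - l ^ 2 / 3 * y - (1 - l ^ 2) * (m : ℝ) ^ 2 / (120 * ((m : ℝ) ^ 2 - 1)) * y ^ 2 ≥ 0 := by
  have hm' : (3 : ℝ) ≤ (m : ℝ) := by exact_mod_cast hm
  have hM : (9 : ℝ) ≤ (m : ℝ) ^ 2 := by nlinarith
  have ht0 : (0.25 : ℝ) ≤ l ^ 2 := by nlinarith
  have ht1 : l ^ 2 ≤ (0.6724 : ℝ) := by nlinarith
  have hy1' : y ≤ (7.84 : ℝ) := by norm_num at hy1 ⊢; linarith
  have hpos : (0 : ℝ) < 120 * ((m : ℝ) ^ 2 - 1) := by nlinarith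
  have key : 240 * ((m : ℝ) ^ 2 - 1) - 40 * l ^ 2 * y * ((m : ℝ) ^ 2 - 1)
      - (1 - l ^ 2) * (m : ℝ) ^ 2 * y ^ 2 ≥ 0 := by
    nlinarith [mul_nonneg hy0 (sub_nonneg.2 hy1'), sq_nonneg y,
      mul_nonneg (sub_nonneg.2 hM) (mul_nonneg hy0 (sub_nonneg.2 hy1')),
      mul_nonneg (sub_nonneg.2 hM) (mul_nonneg (sub_nonneg.2 hy1') (sub_nonneg.2 hy1')),
      mul_nonneg (sub_nonneg.2 ht1) (mul_nonneg hy0 (sub_nonneg.2 hy1')),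
      mul_nonneg (sub_nonneg.2 ht1) (mul_nonneg (sub_nonneg.2 hM) (mul_nonneg hy0 (sub_nonneg.2 hy1'))),
      mul_nonneg (sub_nonneg.2 ht0) (mul_nonneg hy0 (sub_nonneg.2 hy1')),
      mul_nonneg (sub_nonneg.2 ht0) (mul_nonneg (sub_nonneg.2 hM) (mul_nonneg hy0 (sub_nonneg.2 hy1')))]
  have h2 : (1 - l ^ 2) * (m : ℝ) ^ 2 / (120 * ((m : ℝ) ^ 2 - 1)) * y ^ 2
      ≤ 2 - l ^ 2 / 3 * y := by
    rw [div_mul_eq_mul_div, div_le_iff₀ hpos]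
    nlinarith [key]
  linarith
end
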